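/- arXiv:1210.5125 — 2 statements merged into one kernel-verified Lean document; each statement's English description precedes it below -/
import Mathlib

section
/- Let Γ be a finite simple graph with every vertex of positive degree, let Σ be a motif of Γ on vertices p_1, …, p_m, and suppose a nonzero function f on the vertices of Σ satisfies (1/n_{p_α})·∑_{p_β ∈ Σ, p_β ∼ p_α} f(p_β) = (1−λ)·f(p_α) for all α and some real λ, where n_{p_α} denotes the degree of p_α in Γ. Let Γ^Σ be obtained from Γ by doubling Σ (new vertices q_1,…,q_m with q_α ∼ q_β iff p_α ∼ p_β, and q_α joined to every neighbor p ∉ Σ of p_α in Γ). Then the function equal to f(p_α) at p_α, −f(p_α) at q_α, and 0 elsewhere is an eigenfunction of the normalized Laplacian of Γ^Σ for the eigenvalue λ. -/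
open Finset

variable {V W : Type*}

/-- `f` is an eigenfunction of the normalized graph Laplacian of `G` for the eigenvalue `μ`:
`f` is nonzero and `∑_{j ∼ i} f j = (1 - μ) · deg i · f i` for every vertex `i`. -/
def SimpleGraph.IsLapEigenfunction [Fintype V] (G : SimpleGraph V) [DecidableRel G.Adj]
    (μ : ℝ) (f : V → ℝ) : Prop :=
  f ≠ 0 ∧ ∀ i, ∑ j ∈ G.neighborFinset i, f j = (1 - μ) * (G.degree i : ℝ) * f i

/-- `μ` is an eigenvalue of the normalized graph Laplacian of `G`. -/
def SimpleGraph.IsLapEigenvalue [Fintype V] (G : SimpleGraph V) [DecidableRel G.Adj]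
    (μ : ℝ) : Prop :=
  ∃ f : V → ℝ, G.IsLapEigenfunction μ f

/-- The graph obtained from `G` by doubling the motif induced on the vertex set `s`:
a copy of the induced subgraph on `s` is added, and the copy `q_α` of each vertex
`p_α ∈ s` is joined to every neighbor of `p_α` in `G` lying outside `s`
(the copies are not joined to any vertex of `s`). -/
def SimpleGraph.doubleMotif [DecidableEq V] (G : SimpleGraph V) (s : Finset V) :
    SimpleGraph (V ⊕ {x // x ∈ s}) where
  Adj x y :=
    match x, y with
    | Sum.inl a, Sum.inl b => G.Adj a b
    | Sum.inl a, Sum.inr b => a ∉ s ∧ G.Adj a b.1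
    | Sum.inr a, Sum.inl b => b ∉ s ∧ G.Adj a.1 b
    | Sum.inr a, Sum.inr b => G.Adj a.1 b.1
  symm := by
    constructor
    rintro (a | a) (b | b) h
    · exact G.adj_symm h
    · exact ⟨h.1, G.adj_symm h.2⟩
    · exact ⟨h.1, G.adj_symm h.2⟩
    · exact G.adj_symm h
  loopless := by
    constructor
    rintro (a | a) h
    · exact G.irrefl h
    · exact G.irrefl h

instance [DecidableEq V] (G : SimpleGraph V) [DecidableRel G.Adj] (s : Finset V) :
    DecidableRel (G.doubleMotif s).Adj := fun x y =>
  match x, y with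
  | Sum.inl a, Sum.inl b => inferInstanceAs (Decidable (G.Adj a b))
  | Sum.inl a, Sum.inr b => inferInstanceAs (Decidable (a ∉ s ∧ G.Adj a b.1))
  | Sum.inr a, Sum.inl b => inferInstanceAs (Decidable (b ∉ s ∧ G.Adj a.1 b))
  | Sum.inr a, Sum.inr b => inferInstanceAs (Decidable (G.Adj a.1 b.1))

@[simp] lemma dm_adj_ll [DecidableEq V] (G : SimpleGraph V) (s : Finset V) (a b : V) :
    (G.doubleMotif s).Adj (Sum.inl a) (Sum.inl b) ↔ G.Adj a b := Iff.rfl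

@[simp] lemma dm_adj_lr [DecidableEq V] (G : SimpleGraph V) (s : Finset V) (a : V) (b : {x // x ∈ s}) :
    (G.doubleMotif s).Adj (Sum.inl a) (Sum.inr b) ↔ a ∉ s ∧ G.Adj a b.1 := Iff.rfl

@[simp] lemma dm_adj_rl [DecidableEq V] (G : SimpleGraph V) (s : Finset V) (a : {x // x ∈ s}) (b : V) :
    (G.doubleMotif s).Adj (Sum.inr a) (Sum.inl b) ↔ b ∉ s ∧ G.Adj a.1 b := Iff.rfl

@[simp] lemma dm_adj_rr [DecidableEq V] (G : SimpleGraph V) (s : Finset V) (a b : {x // x ∈ s}) :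
    (G.doubleMotif s).Adj (Sum.inr a) (Sum.inr b) ↔ G.Adj a.1 b.1 := Iff.rfl

lemma dm_deg_inl [Fintype V] [DecidableEq V] (G : SimpleGraph V) [DecidableRel G.Adj]
    (s : Finset V) {a : V} (ha : a ∈ s) :
    (G.doubleMotif s).degree (Sum.inl a) = G.degree a := by
  have h : (G.doubleMotif s).neighborFinset (Sum.inl a)
      = (G.neighborFinset a).map ⟨Sum.inl, Sum.inl_injective⟩ := by
    ext x
    cases x with
    | inl b => simp
    | inr b => simp [ha]
  rw [SimpleGraph.degree, h, Finset.card_map, SimpleGraph.degree]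

lemma dm_deg_inr [Fintype V] [DecidableEq V] (G : SimpleGraph V) [DecidableRel G.Adj]
    (s : Finset V) (a : {x // x ∈ s}) :
    (G.doubleMotif s).degree (Sum.inr a) = G.degree a.1 := by
  rw [SimpleGraph.degree, SimpleGraph.degree, SimpleGraph.neighborFinset_eq_filter,
    SimpleGraph.neighborFinset_eq_filter, Finset.card_filter, Finset.card_filter,
    Fintype.sum_sum_type]
  have h2 : (∑ b : {x // x ∈ s}, if (G.doubleMotif s).Adj (Sum.inr a) (Sum.inr b) then 1 else 0)
      = ∑ b : V, if b ∈ s ∧ G.Adj a.1 b then 1 else 0 := by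
    rw [show (fun b : {x // x ∈ s} => if (G.doubleMotif s).Adj (Sum.inr a) (Sum.inr b) then (1:ℕ) else 0)
        = fun b : {x // x ∈ s} => if G.Adj a.1 b.1 then (1:ℕ) else 0 from rfl,
      Finset.sum_coe_sort s (fun b => if G.Adj a.1 b then (1:ℕ) else 0)]
    calc (∑ b ∈ s, if G.Adj a.1 b then (1:ℕ) else 0)
        = ∑ b ∈ s, if b ∈ s ∧ G.Adj a.1 b then (1:ℕ) else 0 :=
          Finset.sum_congr rfl (fun b hb => by simp [hb])
      _ = ∑ b : V, if b ∈ s ∧ G.Adj a.1 b then (1:ℕ) else 0 :=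
          Finset.sum_subset (Finset.subset_univ s) (fun b _ hb => by simp [hb])
  rw [h2, ← Finset.sum_add_distrib]
  apply Finset.sum_congr rfl
  intro b _
  by_cases h1 : b ∈ s <;> by_cases h3 : G.Adj a.1 b <;> simp [h1, h3]

/-- If a nonzero function `f` on the vertex set `s` of a motif of `Γ`
satisfies `∑_{b ∈ s, b ∼ a} f b = (1 - λ) · deg_Γ a · f a` for all `a ∈ s` and some real
`λ`, then the function equal to `f` on `s`, `-f` on the duplicate of `s`, and `0`
elsewhere is an eigenfunction of the normalized Laplacian of the motif-doubled graph for
the eigenvalue `λ`. -/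
theorem doubleMotif_isLapEigenfunction
    {V : Type*} [Fintype V] [DecidableEq V] (G : SimpleGraph V) [DecidableRel G.Adj]
    (hdeg : ∀ v, 0 < G.degree v) (s : Finset V) (lam : ℝ) (f : V → ℝ)
    (hne : ∃ a ∈ s, f a ≠ 0)
    (heq : ∀ a ∈ s, ∑ b ∈ s.filter (fun b => G.Adj a b), f b
      = (1 - lam) * (G.degree a : ℝ) * f a) :
    (G.doubleMotif s).IsLapEigenfunction lam
      (Sum.elim (fun a => if a ∈ s then f a else 0) (fun b => -f b.1)) := by
  classical
  have key : ∀ a : V, (∑ b : V, if G.Adj a b then (if b ∈ s then f b else 0) else 0)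
      = ∑ b ∈ s.filter (fun b => G.Adj a b), f b := by
    intro a
    calc (∑ b : V, if G.Adj a b then (if b ∈ s then f b else 0) else 0)
        = ∑ b : V, if b ∈ s then (if G.Adj a b then f b else 0) else 0 :=
          Finset.sum_congr rfl (fun b _ => by
            by_cases h1 : G.Adj a b <;> by_cases h2 : b ∈ s <;> simp [h1, h2])
      _ = ∑ b ∈ Finset.univ ∩ s, (if G.Adj a b then f b else 0) :=
          Finset.sum_ite_mem _ _ _
      _ = ∑ b ∈ s, (if G.Adj a b then f b else 0) := by rw [Finset.univ_inter]
      _ = ∑ b ∈ s.filter (fun b => G.Adj a b), f b := (Finset.sum_filter _ _).symm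
  have key2 : ∀ a : V, (∑ b : {x // x ∈ s}, if G.Adj a b.1 then -f b.1 else 0)
      = -∑ b ∈ s.filter (fun b => G.Adj a b), f b := by
    intro a
    rw [Finset.sum_coe_sort s (fun b => if G.Adj a b then -f b else 0),
      Finset.sum_filter, ← Finset.sum_neg_distrib]
    exact Finset.sum_congr rfl (fun b _ => by by_cases h1 : G.Adj a b <;> simp [h1])
  constructor
  · obtain ⟨a, ha, hfa⟩ := hne
    intro h
    have h2 := congrFun h (Sum.inl a)
    simp [ha] at h2
    exact hfa h2
  · intro i
    rw [SimpleGraph.neighborFinset_eq_filter, Finset.sum_filter, Fintype.sum_sum_type]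
    cases i with
    | inl a =>
      by_cases ha : a ∈ s
      · simp only [Sum.elim_inl, Sum.elim_inr, dm_adj_ll, dm_adj_lr, ha, not_true_eq_false,
          false_and, if_false, Finset.sum_const_zero, add_zero, if_true, dm_deg_inl G s ha]
        rw [key a, heq a ha]
      · simp only [Sum.elim_inl, Sum.elim_inr, dm_adj_ll, dm_adj_lr, ha, not_false_eq_true,
          true_and, if_false, mul_zero]
        rw [key a, key2 a]
        ring
    | inr a =>
      simp only [Sum.elim_inl, Sum.elim_inr, dm_adj_rl, dm_adj_rr]
      have h1 : (∑ b : V, if (b ∉ s ∧ G.Adj a.1 b) then (if b ∈ s then f b else 0) else 0)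
          = 0 :=
        Finset.sum_eq_zero (fun b _ => by by_cases hb : b ∈ s <;> simp [hb])
      rw [h1, zero_add, key2 a.1, heq a.1 a.2, dm_deg_inr]
      ring
end

section
/- (Corollary 2) Let Γ be a finite simple graph, let Σ be a complete graph K_n on n ≥ 2 vertices disjoint from Γ, fix a vertex p ∈ Γ, and let Γ^Σ be the graph consisting of Γ, Σ, and additional edges joining p to every vertex of Σ. Assume every vertex of Γ^Σ has positive degree. Then λ = (n+1)/n is an eigenvalue of the normalized Laplacian of Γ^Σ with multiplicity at least n − 1. -/
open Finset

variable {V W : Type*}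

/-- The eigenspace of the normalized graph Laplacian of `G` for the eigenvalue `μ`
(written via the eigenfunction equation); its dimension is the multiplicity of `μ`. -/
def SimpleGraph.lapEigenspace [Fintype V] (G : SimpleGraph V) [DecidableRel G.Adj]
    (μ : ℝ) : Submodule ℝ (V → ℝ) where
  carrier := {f | ∀ i, ∑ j ∈ G.neighborFinset i, f j = (1 - μ) * (G.degree i : ℝ) * f i}
  zero_mem' := by intro i; simp
  add_mem' := by
    intro f g hf hg i
    simp only [Pi.add_apply, Finset.sum_add_distrib, hf i, hg i]
    ring
  smul_mem' := by
    intro c f hf i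
    simp only [Pi.smul_apply, smul_eq_mul, ← Finset.mul_sum, hf i]
    ring

/-- Coupling: the disjoint union of `G` and `H` together with additional edges joining the
vertex `p` of `G` to every vertex of `H` lying in `c`. -/
def SimpleGraph.coupleOne [DecidableEq V] (G : SimpleGraph V) (H : SimpleGraph W)
    (p : V) (c : Finset W) : SimpleGraph (V ⊕ W) where
  Adj x y :=
    match x, y with
    | Sum.inl a, Sum.inl b => G.Adj a b
    | Sum.inl a, Sum.inr b => a = p ∧ b ∈ c
    | Sum.inr a, Sum.inl b => b = p ∧ a ∈ c
    | Sum.inr a, Sum.inr b => H.Adj a b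
  symm := ⟨by
    rintro (a | a) (b | b) h
    · exact G.adj_symm h
    · exact h
    · exact h
    · exact H.adj_symm h⟩
  loopless := ⟨by
    rintro (a | a) h
    · exact G.irrefl h
    · exact H.irrefl h⟩

instance [DecidableEq V] [DecidableEq W] (G : SimpleGraph V) (H : SimpleGraph W)
    [DecidableRel G.Adj] [DecidableRel H.Adj] (p : V) (c : Finset W) :
    DecidableRel (G.coupleOne H p c).Adj := fun x y =>
  match x, y with
  | Sum.inl a, Sum.inl b => inferInstanceAs (Decidable (G.Adj a b))
  | Sum.inl a, Sum.inr b => inferInstanceAs (Decidable (a = p ∧ b ∈ c))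
  | Sum.inr a, Sum.inl b => inferInstanceAs (Decidable (b = p ∧ a ∈ c))
  | Sum.inr a, Sum.inr b => inferInstanceAs (Decidable (H.Adj a b))


section Aux
variable {V : Type*} [Fintype V] [DecidableEq V] (G : SimpleGraph V) [DecidableRel G.Adj]
  (n : ℕ) (p : V)

private lemma aux_nbr_sum (f : V ⊕ Fin n → ℝ) (i : V ⊕ Fin n) :
    ∑ j ∈ (G.coupleOne (⊤ : SimpleGraph (Fin n)) p Finset.univ).neighborFinset i, f j
      = ∑ j : V ⊕ Fin n,
          if (G.coupleOne (⊤ : SimpleGraph (Fin n)) p Finset.univ).Adj i j then f j else 0 := by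
  rw [show (G.coupleOne (⊤ : SimpleGraph (Fin n)) p Finset.univ).neighborFinset i
      = Finset.univ.filter ((G.coupleOne (⊤ : SimpleGraph (Fin n)) p Finset.univ).Adj i) from by
    ext; simp, Finset.sum_filter]

private lemma aux_deg_inr (a : Fin n) :
    (G.coupleOne (⊤ : SimpleGraph (Fin n)) p Finset.univ).degree (Sum.inr a) = n := by
  classical
  rw [SimpleGraph.degree]
  rw [show (G.coupleOne (⊤ : SimpleGraph (Fin n)) p Finset.univ).neighborFinset (Sum.inr a)
      = {Sum.inl p} ∪ (Finset.univ \ {a}).image Sum.inr from ?_]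
  · rw [Finset.card_union_of_disjoint (by simp)]
    rw [Finset.card_image_of_injective _ Sum.inr_injective,
      Finset.card_sdiff_of_subset (by simp)]
    simp only [Finset.card_singleton, Finset.card_univ, Fintype.card_fin]
    have := a.is_lt
    omega
  · ext (b | b) <;> rw [SimpleGraph.mem_neighborFinset] <;>
      simp [SimpleGraph.coupleOne, SimpleGraph.mem_neighborFinset, eq_comm, Ne]

private lemma aux_mem_eigenspace (hn : 1 ≤ n) (g : Fin n → ℝ) (hg : ∑ i, g i = 0) :
    Sum.elim (0 : V → ℝ) g ∈ (G.coupleOne (⊤ : SimpleGraph (Fin n)) p Finset.univ).lapEigenspace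
      (((n : ℝ) + 1) / (n : ℝ)) := by
  have hn0 : (n : ℝ) ≠ 0 := by
    exact Nat.cast_ne_zero.2 (by omega)
  intro i
  rw [aux_nbr_sum, Fintype.sum_sum_type]
  rcases i with v | a
  · -- vertex in G-part: everything vanishes
    have h1 : ∑ b : V, (if (G.coupleOne (⊤ : SimpleGraph (Fin n)) p Finset.univ).Adj
        (Sum.inl v) (Sum.inl b) then Sum.elim (0 : V → ℝ) g (Sum.inl b) else 0) = 0 := by
      simp
    have h2 : ∑ b : Fin n, (if (G.coupleOne (⊤ : SimpleGraph (Fin n)) p Finset.univ).Adj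
        (Sum.inl v) (Sum.inr b) then Sum.elim (0 : V → ℝ) g (Sum.inr b) else 0) = 0 := by
      by_cases hv : v = p
      · subst hv
        simpa [SimpleGraph.coupleOne] using hg
      · simp [SimpleGraph.coupleOne, hv]
    rw [h1, h2]
    simp
  · -- vertex in K_n-part
    have h1 : ∑ b : V, (if (G.coupleOne (⊤ : SimpleGraph (Fin n)) p Finset.univ).Adj
        (Sum.inr a) (Sum.inl b) then Sum.elim (0 : V → ℝ) g (Sum.inl b) else 0) = 0 := by
      simp
    have h2 : ∑ b : Fin n, (if (G.coupleOne (⊤ : SimpleGraph (Fin n)) p Finset.univ).Adj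
        (Sum.inr a) (Sum.inr b) then Sum.elim (0 : V → ℝ) g (Sum.inr b) else 0) = - g a := by
      have : ∀ b : Fin n, (G.coupleOne (⊤ : SimpleGraph (Fin n)) p Finset.univ).Adj
          (Sum.inr a) (Sum.inr b) ↔ a ≠ b := by
        intro b; simp [SimpleGraph.coupleOne]
      simp only [this, Sum.elim_inr]
      rw [← Finset.sum_filter]
      rw [show (Finset.univ.filter fun b => a ≠ b) = Finset.univ.erase a from by
        ext b; simp [eq_comm]]
      have h3 : g a + ∑ b ∈ Finset.univ.erase a, g b = 0 := by
        rw [Finset.add_sum_erase Finset.univ g (Finset.mem_univ a)]; exact hg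
      linarith
    rw [h1, h2, aux_deg_inr]
    simp only [Sum.elim_inr]
    field_simp
    ring

end Aux

/-- **Corollary 2.** Join a vertex `p` of `Γ` to every vertex of a complete
graph `K_n` (`n ≥ 2`) disjoint from `Γ`.  Then `(n+1)/n` is an eigenvalue of the normalized
Laplacian of the coupled graph with multiplicity at least `n - 1`. -/
theorem coupleOne_complete_eigenvalue
    {V : Type*} [Fintype V] [DecidableEq V] (G : SimpleGraph V) [DecidableRel G.Adj]
    (n : ℕ) (hn : 2 ≤ n) (p : V)
    (hdeg : ∀ x, 0 < (G.coupleOne (⊤ : SimpleGraph (Fin n)) p Finset.univ).degree x) :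
    (G.coupleOne (⊤ : SimpleGraph (Fin n)) p Finset.univ).IsLapEigenvalue
        (((n : ℝ) + 1) / (n : ℝ))
      ∧ n - 1 ≤ Module.finrank ℝ
        ((G.coupleOne (⊤ : SimpleGraph (Fin n)) p Finset.univ).lapEigenspace
          (((n : ℝ) + 1) / (n : ℝ))) := by
  classical
  have hn1 : 1 ≤ n := by omega
  constructor
  · -- eigenvalue: exhibit a nonzero eigenfunction
    have h01 : (⟨0, by omega⟩ : Fin n) ≠ ⟨1, by omega⟩ := by
      simp [Fin.ext_iff]
    set g : Fin n → ℝ :=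
      Pi.single (⟨0, by omega⟩ : Fin n) 1 - Pi.single (⟨1, by omega⟩ : Fin n) 1 with hgdef
    have hsum : ∑ i, g i = 0 := by
      rw [hgdef]
      simp [Finset.sum_sub_distrib]
    refine ⟨Sum.elim (0 : V → ℝ) g, ?_, aux_mem_eigenspace G n p hn1 g hsum⟩
    intro h
    have hg0 : g ⟨0, by omega⟩ = 0 := by
      have := congrFun h (Sum.inr ⟨0, by omega⟩)
      simpa using this
    rw [hgdef] at hg0
    simp [Pi.single_apply, h01] at hg0
  · -- multiplicity
    set φ : (Fin n → ℝ) →ₗ[ℝ] ℝ := ∑ i : Fin n, LinearMap.proj i with hφ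
    have hφ_apply : ∀ g, φ g = ∑ i, g i := by
      intro g; simp [hφ]
    have hker : Module.finrank ℝ (LinearMap.ker φ) = n - 1 := by
      have hsurj : Function.Surjective φ := by
        intro x
        refine ⟨fun _ => x / n, ?_⟩
        rw [hφ_apply]
        rw [Finset.sum_const, Finset.card_univ, Fintype.card_fin]
        have hn0 : (n : ℝ) ≠ 0 := by
          exact Nat.cast_ne_zero.2 (by omega)
        rw [nsmul_eq_mul]
        field_simp
      have := LinearMap.finrank_range_add_finrank_ker φ
      rw [LinearMap.range_eq_top.2 hsurj] at this
      simp only [finrank_top, Module.finrank_self] at this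
      have hdim : Module.finrank ℝ (Fin n → ℝ) = n := by
        simp
      rw [hdim] at this
      omega
    set E := (G.coupleOne (⊤ : SimpleGraph (Fin n)) p Finset.univ).lapEigenspace
        (((n : ℝ) + 1) / (n : ℝ)) with hE
    let T : LinearMap.ker φ →ₗ[ℝ] E :=
      { toFun := fun g => ⟨Sum.elim (0 : V → ℝ) g.1, aux_mem_eigenspace G n p hn1 g.1
          (by rw [← hφ_apply]; exact g.2)⟩
        map_add' := by
          intro a b
          ext x
          rcases x with v | w <;> simp
        map_smul' := by
          intro c a
          ext x
          rcases x with v | w <;> simp }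
    have hT : Function.Injective T := by
      intro a b hab
      ext i
      have := congrFun (congrArg Subtype.val hab) (Sum.inr i)
      simpa [T] using this
    have := LinearMap.finrank_le_finrank_of_injective hT
    omega
end
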